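/- Let k₁, k₂, m be natural numbers with m < k₁ ≤ k₂ and k₁ + k₂ − m ≤ dim E. Let Y₁ be a subspace of E with dim Y₁ = k₁ − m and X₂ a subspace with dim X₂ = k₂, such that Y₁ ∩ X₂ is a single point. Then the following are equivalent: (i) Y₁ ⊥g X₂; (ii) for every subspace X₁ with dim X₁ = k₁, Y₁ ⊆ X₁, and dim(X₁ ∩ X₂) = m, one has X₁ ⊥g X₂. -/

import Mathlib

/-!
With `W = X₁ ⊓ X₂` and `Dᵢ` the direction of `Xᵢ`, the spaces `Zᵢ` in the definition of `⊥g∘` are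
forced to have direction `Wᗮ ⊓ Dᵢ`, so `X₁ ⊥g∘ X₂` says exactly that `Wᗮ ⊓ D₁ ⟂ Wᗮ ⊓ D₂`. When
`Y₁ ⊓ X₂` is a point this reads `D(Y₁) ⟂ D₂`. If `Y₁ ≤ X₁` and `dim (X₁ ⊓ X₂) = m`, a dimension
count gives `D₁ = D(Y₁) ⊔ D(W)`, whence `Wᗮ ⊓ D₁ = D(Y₁)`, which gives (i) ⇒ (ii). Conversely, choose
an `m`-dimensional `V ≤ D₂ ⊓ D(Y₁)ᗮ` and test (ii) on `X₁ = p + (D(Y₁) ⊔ V)`: then `X₁ ⊓ X₂` has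
direction `V`, so (ii) gives `D(Y₁) ⟂ Vᗮ ⊓ D₂`, and `D₂ = V ⊔ (Vᗮ ⊓ D₂)`.
-/

/-- `Perp X Y`: every vector in the direction of `X` is orthogonal to every
vector in the direction of `Y`. -/
def Perp {E : Type*} [NormedAddCommGroup E] [InnerProductSpace ℝ E]
    (X Y : AffineSubspace ℝ E) : Prop :=
  ∀ u ∈ X.direction, ∀ v ∈ Y.direction, (inner ℝ u v : ℝ) = 0

/-- `PerpX X Y`: `X ⊥ Y` and `X ∩ Y ≠ ∅`. -/
def PerpX {E : Type*} [NormedAddCommGroup E] [InnerProductSpace ℝ E]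
    (X Y : AffineSubspace ℝ E) : Prop :=
  Perp X Y ∧ ((X : Set E) ∩ (Y : Set E)).Nonempty

/-- `PerpGo X₁ X₂`: the relation `⊥g∘`. -/
def PerpGo {E : Type*} [NormedAddCommGroup E] [InnerProductSpace ℝ E]
    (X₁ X₂ : AffineSubspace ℝ E) : Prop :=
  ∃ q : E, q ∈ X₁ ⊓ X₂ ∧ ∃ Z₁ Z₂ : AffineSubspace ℝ E,
    q ∈ Z₁ ∧ q ∈ Z₂ ∧ PerpX Z₁ (X₁ ⊓ X₂) ∧ PerpX Z₂ (X₁ ⊓ X₂) ∧ PerpX Z₁ Z₂ ∧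
    (X₁ ⊓ X₂) ⊔ Z₁ = X₁ ∧ (X₁ ⊓ X₂) ⊔ Z₂ = X₂

/-- `PerpG X₁ X₂`: the relation `⊥g`. -/
def PerpG {E : Type*} [NormedAddCommGroup E] [InnerProductSpace ℝ E]
    (X₁ X₂ : AffineSubspace ℝ E) : Prop :=
  PerpGo X₁ X₂ ∧ X₁ ⊓ X₂ ≠ X₁ ∧ X₁ ⊓ X₂ ≠ X₂

/-- Dimension of an affine subspace: the dimension of its direction. -/
noncomputable def adim {E : Type*} [NormedAddCommGroup E] [InnerProductSpace ℝ E]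
    (X : AffineSubspace ℝ E) : ℕ :=
  Module.finrank ℝ X.direction

open Module Submodule AffineSubspace

lemma Submodule.exists_le_finrank_eq {K V : Type*} [DivisionRing K] [AddCommGroup V] [Module K V]
    {D : Submodule K V} {m : ℕ} (h : m ≤ finrank K D) :
    ∃ U : Submodule K V, U ≤ D ∧ finrank K U = m := by
  obtain ⟨f, hf⟩ := exists_linearIndependent_of_le_finrank h
  refine ⟨span K (Set.range (D.subtype ∘ f)), ?_, ?_⟩
  · rw [span_le]
    rintro _ ⟨i, rfl⟩
    exact (f i).2
  · simpa using finrank_span_eq_card (hf.map' D.subtype D.ker_subtype)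

section Orthogonal

variable {E : Type*} [NormedAddCommGroup E] [InnerProductSpace ℝ E]

lemma Submodule.IsOrtho.finrank_sup {K V : Submodule ℝ E} [FiniteDimensional ℝ K]
    [FiniteDimensional ℝ V] (h : K ⟂ V) : finrank ℝ ↥(K ⊔ V) = finrank ℝ K + finrank ℝ V := by
  have := finrank_sup_add_finrank_inf_eq K V
  rwa [h.disjoint.eq_bot, finrank_bot, add_zero] at this

lemma Submodule.IsOrtho.orthogonal_inf_sup_eq {K V : Submodule ℝ E} (h : K ⟂ V) :
    Vᗮ ⊓ (K ⊔ V) = K := by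
  rw [inf_comm, sup_inf_assoc_of_le V h.le, inf_orthogonal_eq_bot, sup_bot_eq]

lemma Submodule.isOrtho_of_isOrtho_orthogonal_inf {K V U : Submodule ℝ E}
    [V.HasOrthogonalProjection] (hVU : V ≤ U) (hV : K ⟂ V) (h : K ⟂ Vᗮ ⊓ U) : K ⟂ U := by
  rw [← sup_orthogonal_inf_of_hasOrthogonalProjection hVU]
  exact isOrtho_sup_right.2 ⟨hV, h⟩

lemma Submodule.finrank_le_finrank_add_finrank_inf_orthogonal [FiniteDimensional ℝ E]
    (U K : Submodule ℝ E) : finrank ℝ U ≤ finrank ℝ K + finrank ℝ ↥(U ⊓ Kᗮ) := by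
  have hsup := finrank_sup_add_finrank_inf_eq U Kᗮ
  have hle := (U ⊔ Kᗮ).finrank_le
  have horth := K.finrank_add_finrank_orthogonal
  omega

end Orthogonal

section Affine

variable {E : Type*} [NormedAddCommGroup E] [InnerProductSpace ℝ E]

lemma perp_iff_isOrtho {X Y : AffineSubspace ℝ E} : Perp X Y ↔ X.direction ⟂ Y.direction :=
  isOrtho_iff_inner_eq.symm

lemma perpX_mk' {X : AffineSubspace ℝ E} {p : E} {U : Submodule ℝ E} (hp : p ∈ X)
    (h : U ⟂ X.direction) : PerpX (mk' p U) X :=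
  ⟨perp_iff_isOrtho.2 (by rwa [direction_mk']), p, self_mem_mk' p U, hp⟩

lemma direction_eq_orthogonal_inf_of_sup_eq {W Z X : AffineSubspace ℝ E} {q : E} (hqW : q ∈ W)
    (hqZ : q ∈ Z) (hZW : Perp Z W) (h : W ⊔ Z = X) : W.directionᗮ ⊓ X.direction = Z.direction := by
  rw [← h, direction_sup_eq_sup_direction hqW hqZ, sup_comm]
  exact (perp_iff_isOrtho.1 hZW).orthogonal_inf_sup_eq

lemma direction_mk'_sup_inf_eq {X : AffineSubspace ℝ E} {p : E} {K V : Submodule ℝ E}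
    (hp : p ∈ X) (hV : V ≤ X.direction) (hK : K ⊓ X.direction = ⊥) :
    (mk' p (K ⊔ V) ⊓ X).direction = V := by
  rw [direction_inf_of_mem (self_mem_mk' p _) hp, direction_mk', sup_comm,
    sup_inf_assoc_of_le K hV, hK, sup_bot_eq]

lemma coe_inf_eq_singleton {Y X : AffineSubspace ℝ E} {p : E} (h : (Y : Set E) ∩ X = {p}) :
    ((Y ⊓ X : AffineSubspace ℝ E) : Set E) = {p} :=
  (AffineSubspace.coe_inf Y X).trans h

lemma mem_inf_of_inter_eq_singleton {Y X : AffineSubspace ℝ E} {p : E}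
    (h : (Y : Set E) ∩ X = {p}) : p ∈ Y ⊓ X := by
  rw [← SetLike.mem_coe, coe_inf_eq_singleton h]
  rfl

lemma direction_inf_eq_bot_of_inter_eq_singleton {Y X : AffineSubspace ℝ E} {p : E}
    (h : (Y : Set E) ∩ X = {p}) : (Y ⊓ X).direction = ⊥ := by
  rw [direction_eq_vectorSpan, coe_inf_eq_singleton h, vectorSpan_singleton]

variable [FiniteDimensional ℝ E]

lemma sup_mk'_orthogonal_inf_eq {W X : AffineSubspace ℝ E} {p : E} (hp : p ∈ W) (hWX : W ≤ X) :
    W ⊔ mk' p (W.directionᗮ ⊓ X.direction) = X := by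
  rw [eq_iff_direction_eq_of_mem (le_sup_left (a := W) hp) (hWX hp),
    direction_sup_eq_sup_direction hp (self_mem_mk' _ _), direction_mk',
    sup_orthogonal_inf_of_hasOrthogonalProjection (direction_le hWX)]

theorem perpGo_iff_isOrtho {X₁ X₂ : AffineSubspace ℝ E} {p : E} (hp : p ∈ X₁ ⊓ X₂) :
    PerpGo X₁ X₂ ↔
      ((X₁ ⊓ X₂).directionᗮ ⊓ X₁.direction) ⟂ ((X₁ ⊓ X₂).directionᗮ ⊓ X₂.direction) := by
  constructor
  · rintro ⟨q, hq, Z₁, Z₂, hqZ₁, hqZ₂, ⟨hZ₁W, -⟩, ⟨hZ₂W, -⟩, ⟨hZ₁Z₂, -⟩, hsup₁, hsup₂⟩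
    rw [direction_eq_orthogonal_inf_of_sup_eq hq hqZ₁ hZ₁W hsup₁,
      direction_eq_orthogonal_inf_of_sup_eq hq hqZ₂ hZ₂W hsup₂]
    exact perp_iff_isOrtho.1 hZ₁Z₂
  · intro h
    set W := X₁ ⊓ X₂
    refine ⟨p, hp, mk' p (W.directionᗮ ⊓ X₁.direction), mk' p (W.directionᗮ ⊓ X₂.direction),
      self_mem_mk' _ _, self_mem_mk' _ _,
      perpX_mk' hp ((isOrtho_orthogonal_left _).mono_left inf_le_left),
      perpX_mk' hp ((isOrtho_orthogonal_left _).mono_left inf_le_left),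
      perpX_mk' (self_mem_mk' _ _) (by rwa [direction_mk']),
      sup_mk'_orthogonal_inf_eq hp inf_le_left, sup_mk'_orthogonal_inf_eq hp inf_le_right⟩

theorem perpG_iff_isOrtho_of_inter_eq_singleton {Y X : AffineSubspace ℝ E} {p : E}
    (h : (Y : Set E) ∩ X = {p}) (hY : Y.direction ≠ ⊥) (hX : X.direction ≠ ⊥) :
    PerpG Y X ↔ Y.direction ⟂ X.direction := by
  have hW := direction_inf_eq_bot_of_inter_eq_singleton h
  rw [PerpG, perpGo_iff_isOrtho (mem_inf_of_inter_eq_singleton h), hW, bot_orthogonal_eq_top,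
    top_inf_eq, top_inf_eq]
  refine ⟨fun hG => hG.1, fun hYX => ⟨hYX, fun hWY => hY ?_, fun hWX => hX ?_⟩⟩
  · rw [← hWY, hW]
  · rw [← hWX, hW]

theorem perpGo_of_le_of_isOrtho {Y X₁ X₂ : AffineSubspace ℝ E} {p : E} (hp : p ∈ Y ⊓ X₂)
    (hYX₁ : Y ≤ X₁) (hYX₂ : Y.direction ⟂ X₂.direction)
    (hdim : adim X₁ = adim Y + adim (X₁ ⊓ X₂)) : PerpGo X₁ X₂ := by
  have hYW : Y.direction ⟂ (X₁ ⊓ X₂).direction := hYX₂.mono_right (direction_le inf_le_right)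
  have hX₁ : Y.direction ⊔ (X₁ ⊓ X₂).direction = X₁.direction :=
    eq_of_le_of_finrank_eq (sup_le (direction_le hYX₁) (direction_le inf_le_left))
      (by rw [hYW.finrank_sup]; exact hdim.symm)
  rw [perpGo_iff_isOrtho ⟨hYX₁ hp.1, hp.2⟩, ← hX₁, hYW.orthogonal_inf_sup_eq]
  exact hYX₂.mono_right inf_le_right

theorem isOrtho_of_perpGo_mk'_sup {Y X : AffineSubspace ℝ E} {p : E} {V : Submodule ℝ E}
    (hp : p ∈ X) (hVX : V ≤ X.direction) (hYV : Y.direction ⟂ V)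
    (hYX : Y.direction ⊓ X.direction = ⊥) (h : PerpGo (mk' p (Y.direction ⊔ V)) X) :
    Y.direction ⟂ X.direction := by
  have hW := direction_mk'_sup_inf_eq hp hVX hYX
  rw [perpGo_iff_isOrtho ⟨self_mem_mk' p _, hp⟩, hW, direction_mk',
    hYV.orthogonal_inf_sup_eq] at h
  exact isOrtho_of_isOrtho_orthogonal_inf hVX hYV h

theorem isOrtho_of_forall_perpGo {Y X : AffineSubspace ℝ E} {p : E} {m : ℕ}
    (hpt : (Y : Set E) ∩ X = {p}) (hdim : adim Y + m ≤ adim X)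
    (h : ∀ X₁ : AffineSubspace ℝ E, adim X₁ = adim Y + m → Y ≤ X₁ → adim (X₁ ⊓ X) = m →
      PerpGo X₁ X) :
    Y.direction ⟂ X.direction := by
  have hp := mem_inf_of_inter_eq_singleton hpt
  obtain ⟨V, hV, hVm⟩ := exists_le_finrank_eq (D := X.direction ⊓ Y.directionᗮ) (m := m)
    (by have := finrank_le_finrank_add_finrank_inf_orthogonal X.direction Y.direction
        unfold adim at hdim
        omega)
  have hVX : V ≤ X.direction := hV.trans inf_le_left
  have hYV : Y.direction ⟂ V := (isOrtho_iff_le.2 (hV.trans inf_le_right)).symm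
  have hYX : Y.direction ⊓ X.direction = ⊥ := by
    rw [← direction_inf_of_mem hp.1 hp.2, direction_inf_eq_bot_of_inter_eq_singleton hpt]
  have hYX₁ : Y ≤ mk' p (Y.direction ⊔ V) :=
    (mk'_eq hp.1).symm.le.trans ((mk'_le_mk'_iff p).2 le_sup_left)
  have hX₁ : adim (mk' p (Y.direction ⊔ V)) = adim Y + m := by
    rw [adim, adim, direction_mk', hYV.finrank_sup, hVm]
  have hW : adim (mk' p (Y.direction ⊔ V) ⊓ X) = m := by
    rw [adim, direction_mk'_sup_inf_eq hp.2 hVX hYX, hVm]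
  exact isOrtho_of_perpGo_mk'_sup hp.2 hVX hYV hYX (h _ hX₁ hYX₁ hW)

end Affine

variable {E : Type*} [NormedAddCommGroup E] [InnerProductSpace ℝ E] [FiniteDimensional ℝ E]

theorem stmt5_general (k₁ k₂ m : ℕ) (hm : m < k₁) (hk : k₁ ≤ k₂)
    (Y₁ X₂ : AffineSubspace ℝ E)
    (hY₁ : adim Y₁ = k₁ - m) (hX₂ : adim X₂ = k₂)
    (hpt : ∃ p : E, (Y₁ : Set E) ∩ (X₂ : Set E) = {p}) :
    PerpG Y₁ X₂ ↔
      ∀ X₁ : AffineSubspace ℝ E, (X₁ : Set E).Nonempty → adim X₁ = k₁ → Y₁ ≤ X₁ →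
        adim (X₁ ⊓ X₂) = m → PerpG X₁ X₂ := by
  obtain ⟨p, hpt⟩ := hpt
  have hp := mem_inf_of_inter_eq_singleton hpt
  have hne_bot {X : AffineSubspace ℝ E} (h : 0 < adim X) : X.direction ≠ ⊥ := fun hX => by
    rw [adim, hX, finrank_bot] at h
    exact h.false
  rw [perpG_iff_isOrtho_of_inter_eq_singleton hpt (hne_bot (by omega)) (hne_bot (by omega))]
  constructor
  · intro hYX₂ X₁ _ hX₁ hYX₁ hW
    refine ⟨perpGo_of_le_of_isOrtho hp hYX₁ hYX₂ (by omega), fun h => ?_, fun h => ?_⟩ <;>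
      · have := congrArg adim h
        omega
  · intro h
    refine isOrtho_of_forall_perpGo hpt (by omega) fun X₁ hX₁ hYX₁ hW => (h X₁ ?_ ?_ hYX₁ hW).1
    · exact ⟨p, hYX₁ hp.1⟩
    · omega

theorem stmt5 (k₁ k₂ m : ℕ) (hm : m < k₁) (hk : k₁ ≤ k₂)
    (hdim : k₁ + k₂ - m ≤ Module.finrank ℝ E)
    (Y₁ X₂ : AffineSubspace ℝ E)
    (hY₁ : adim Y₁ = k₁ - m) (hX₂ : adim X₂ = k₂)
    (hpt : ∃ p : E, (Y₁ : Set E) ∩ (X₂ : Set E) = {p}) :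
    PerpG Y₁ X₂ ↔
      ∀ X₁ : AffineSubspace ℝ E, (X₁ : Set E).Nonempty → adim X₁ = k₁ → Y₁ ≤ X₁ →
        adim (X₁ ⊓ X₂) = m → PerpG X₁ X₂ :=
  stmt5_general k₁ k₂ m hm hk Y₁ X₂ hY₁ hX₂ hpt
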